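/- For every n, s ∈ ℕ, the function g(t) = p_n^{α+2s,β}(t)(1−t)^s satisfies M_{1,s}[g] = −(n+s)(n+s+α+β+1) g, where M_{1,s} = D_{2,s} − D1² − (α+β+1) D1 with D1 = (t−1)∂t, D_{2,s} = (1−t)∂t² − (α+1)∂t − s(s+α)/(1−t). -/

import Mathlib

/-- The Pochhammer symbol `(a)_k = a(a+1)⋯(a+k-1)`. -/
noncomputable def poch (a : ℝ) (k : ℕ) : ℝ := ∏ i ∈ Finset.range k, (a + i)

/-- The Jacobi polynomial. -/
noncomputable def jacobiP (α β : ℝ) (n : ℕ) : ℝ → ℝ := fun t =>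
  (-1 : ℝ) ^ n * (poch (α + β + 1) n / n.factorial) * (poch (β + 1) n / poch (α + 1) n) *
    ∑ k ∈ Finset.range (n + 1),
      poch (-(n : ℝ)) k * poch ((n : ℝ) + α + β + 1) k / (k.factorial * poch (β + 1) k) * t ^ k

/-- The operator `D1 = (t-1) ∂_t`. -/
noncomputable def D1 (f : ℝ → ℝ) : ℝ → ℝ := fun t => (t - 1) * deriv f t

/-- The modified operator `D_{2,s} = (1−t)∂t² − (α+1)∂t − s(s+α)/(1−t)`. -/
noncomputable def D2s (α : ℝ) (s : ℕ) (f : ℝ → ℝ) : ℝ → ℝ :=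
  fun t => (1 - t) * deriv (deriv f) t - (α + 1) * deriv f t
    - (s : ℝ) * ((s : ℝ) + α) * f t / (1 - t)

lemma poch_succ (a : ℝ) (k : ℕ) : poch a (k+1) = poch a k * (a + k) :=
  Finset.prod_range_succ _ _

lemma poch_pos {a : ℝ} (ha : 0 < a) (k : ℕ) : 0 < poch a k :=
  Finset.prod_pos (fun i _ => by positivity)

lemma hasDerivAt_sum_pow (N : ℕ) (c : ℕ → ℝ) (x : ℝ) :
    HasDerivAt (fun t : ℝ => ∑ k ∈ Finset.range N, c k * t ^ k)
      (∑ k ∈ Finset.range N, c k * (k * x ^ (k-1))) x := by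
  apply HasDerivAt.fun_sum
  intro k _
  exact (hasDerivAt_pow k x).const_mul (c k)

lemma hasDerivAt_sum_pow' (N : ℕ) (c : ℕ → ℝ) (x : ℝ) :
    HasDerivAt (fun t : ℝ => ∑ k ∈ Finset.range N, c k * ((k : ℝ) * t ^ (k-1)))
      (∑ k ∈ Finset.range N, c k * ((k : ℝ) * ((k-1 : ℕ) * x ^ (k-1-1)))) x := by
  apply HasDerivAt.fun_sum
  intro k _
  exact ((hasDerivAt_pow (k-1) x).const_mul (k : ℝ)).const_mul (c k)

lemma jacobi_ode (α β : ℝ) (hβ : 0 < β + 1) (n : ℕ) (t : ℝ) :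
    t * (1 - t) * (∑ k ∈ Finset.range (n+1),
        (poch (-(n:ℝ)) k * poch ((n:ℝ) + α + β + 1) k / (k.factorial * poch (β+1) k))
          * ((k : ℝ) * ((k-1 : ℕ) * t ^ (k-1-1))))
      + (β + 1 - (α + β + 2) * t) * (∑ k ∈ Finset.range (n+1),
        (poch (-(n:ℝ)) k * poch ((n:ℝ) + α + β + 1) k / (k.factorial * poch (β+1) k))
          * ((k : ℝ) * t ^ (k-1)))
      + (n * ((n:ℝ) + α + β + 1)) * (∑ k ∈ Finset.range (n+1),
        (poch (-(n:ℝ)) k * poch ((n:ℝ) + α + β + 1) k / (k.factorial * poch (β+1) k))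
          * t ^ k) = 0 := by
  set c : ℕ → ℝ := fun k =>
    poch (-(n:ℝ)) k * poch ((n:ℝ) + α + β + 1) k / (k.factorial * poch (β+1) k) with hc
  rw [Finset.mul_sum, Finset.mul_sum, Finset.mul_sum, ← Finset.sum_add_distrib,
    ← Finset.sum_add_distrib]
  have step1 : ∀ k ∈ Finset.range (n+1),
      t * (1 - t) * (c k * ((k : ℝ) * ((k-1 : ℕ) * t ^ (k-1-1))))
        + (β + 1 - (α + β + 2) * t) * (c k * ((k : ℝ) * t ^ (k-1)))
        + (n * ((n:ℝ) + α + β + 1)) * (c k * t ^ k)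
      = c k * ((k : ℝ) * ((k : ℝ) + β)) * t ^ (k-1)
        - c k * (((k : ℝ) - n) * ((k : ℝ) + n + α + β + 1)) * t ^ k := by
    intro k _
    rcases k with _ | _ | k
    · norm_num; ring
    · norm_num; ring
    · push_cast [Nat.succ_sub_one, Nat.add_sub_cancel]
      ring
  rw [Finset.sum_congr rfl step1, Finset.sum_sub_distrib, sub_eq_zero]
  rw [Finset.sum_range_succ'  (fun k => c k * ((k : ℝ) * ((k : ℝ) + β)) * t ^ (k-1)),
    Finset.sum_range_succ (fun k => c k * (((k : ℝ) - n) * ((k : ℝ) + n + α + β + 1)) * t ^ k)]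
  simp only [Nat.cast_zero, zero_mul, mul_zero, sub_self, zero_add, add_zero,
    Nat.add_sub_cancel]
  apply Finset.sum_congr rfl
  intro k _
  have hfac : ((k.factorial : ℝ)) ≠ 0 := Nat.cast_ne_zero.mpr k.factorial_ne_zero
  have hp3 : poch (β+1) k ≠ 0 := ne_of_gt (poch_pos hβ k)
  have hbk : (β + 1 + k) ≠ 0 := by positivity
  have hk1 : ((k:ℝ) + 1) ≠ 0 := by positivity
  rw [hc]
  simp only [poch_succ, Nat.factorial_succ]
  push_cast
  field_simp
  ring

/-- `g(t) = p_n^{α+2s,β}(t)(1−t)^s` is an eigenfunction of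
`M_{1,s} = D_{2,s} − D1² − (α+β+1)D1` with eigenvalue `−(n+s)(n+s+α+β+1)`. -/
theorem statement8 (α β : ℝ) (hα : -1 < α) (hβ : -1 < β) (n s : ℕ)
    (t : ℝ) (ht : t ∈ Set.Ioo (0 : ℝ) 1) :
    D2s α s (fun u => jacobiP (α + 2 * s) β n u * (1 - u) ^ s) t
        - D1 (D1 (fun u => jacobiP (α + 2 * s) β n u * (1 - u) ^ s)) t
        - (α + β + 1) * D1 (fun u => jacobiP (α + 2 * s) β n u * (1 - u) ^ s) t
      = -((n : ℝ) + s) * ((n : ℝ) + s + α + β + 1)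
          * (jacobiP (α + 2 * s) β n t * (1 - t) ^ s) := by
  obtain ⟨ht0, ht1⟩ := ht
  have h1t : (1:ℝ) - t ≠ 0 := by intro h; linarith
  have hβ' : 0 < β + 1 := by linarith
  set A : ℝ := α + 2 * s with hA
  set C0 : ℝ := (-1:ℝ)^n * (poch (A + β + 1) n / n.factorial) *
    (poch (β + 1) n / poch (A + 1) n) with hC0
  set c : ℕ → ℝ := fun k =>
    poch (-(n:ℝ)) k * poch ((n:ℝ) + A + β + 1) k / (k.factorial * poch (β+1) k) with hc
  set F0 : ℝ → ℝ := fun x => ∑ k ∈ Finset.range (n+1), c k * x ^ k with hF0d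
  set F1 : ℝ → ℝ := fun x => ∑ k ∈ Finset.range (n+1), c k * ((k:ℝ) * x ^ (k-1)) with hF1d
  set F2 : ℝ → ℝ := fun x =>
    ∑ k ∈ Finset.range (n+1), c k * ((k:ℝ) * ((k-1:ℕ) * x ^ (k-1-1))) with hF2d
  have hJ : ∀ x, jacobiP A β n x = C0 * F0 x := fun x => rfl
  have hF0' : ∀ x, HasDerivAt F0 (F1 x) x := fun x => hasDerivAt_sum_pow _ c x
  have hF1' : ∀ x, HasDerivAt F1 (F2 x) x := fun x => hasDerivAt_sum_pow' _ c x
  have hq : ∀ x : ℝ, HasDerivAt (fun u : ℝ => (1-u)^s)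
      ((s:ℝ) * (1-x)^(s-1) * (-1)) x := by
    intro x
    exact ((hasDerivAt_id x).const_sub 1).pow s
  have hq2 : ∀ x : ℝ, HasDerivAt (fun u : ℝ => (s:ℝ) * (1-u)^(s-1) * (-1))
      (((s-1:ℕ):ℝ) * (1-x)^(s-1-1) * (-1) * (s:ℝ) * (-1)) x := by
    intro x
    have h := (((hasDerivAt_id x).const_sub 1).pow (s-1)).const_mul (s:ℝ)
    have h2 := h.mul_const (-1 : ℝ)
    refine h2.congr_deriv ?_
    simp only [id_eq]
    ring
  have hJ' : ∀ x, HasDerivAt (jacobiP A β n) (C0 * F1 x) x := by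
    intro x
    rw [show jacobiP A β n = fun x => C0 * F0 x from funext hJ]
    exact (hF0' x).const_mul C0
  have hg' : ∀ x, HasDerivAt (fun u => jacobiP A β n u * (1-u)^s)
      (C0 * F1 x * (1-x)^s + C0 * F0 x * ((s:ℝ) * (1-x)^(s-1) * (-1))) x := by
    intro x
    have h := (hJ' x).mul (hq x)
    rw [hJ x] at h
    exact h
  have hdg : deriv (fun u => jacobiP A β n u * (1-u)^s)
      = fun x => C0 * F1 x * (1-x)^s + C0 * F0 x * ((s:ℝ) * (1-x)^(s-1) * (-1)) :=
    funext fun x => (hg' x).deriv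
  have hG1' : HasDerivAt
      (fun x => C0 * F1 x * (1-x)^s + C0 * F0 x * ((s:ℝ) * (1-x)^(s-1) * (-1)))
      ((C0 * F2 t * (1-t)^s + C0 * F1 t * ((s:ℝ) * (1-t)^(s-1) * (-1)))
        + (C0 * F1 t * ((s:ℝ) * (1-t)^(s-1) * (-1))
          + C0 * F0 t * (((s-1:ℕ):ℝ) * (1-t)^(s-1-1) * (-1) * (s:ℝ) * (-1)))) t := by
    exact (((hF1' t).const_mul C0).mul (hq t)).add (((hF0' t).const_mul C0).mul (hq2 t))
  have hddg : deriv (deriv (fun u => jacobiP A β n u * (1-u)^s)) t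
      = (C0 * F2 t * (1-t)^s + C0 * F1 t * ((s:ℝ) * (1-t)^(s-1) * (-1)))
        + (C0 * F1 t * ((s:ℝ) * (1-t)^(s-1) * (-1))
          + C0 * F0 t * (((s-1:ℕ):ℝ) * (1-t)^(s-1-1) * (-1) * (s:ℝ) * (-1))) := by
    rw [hdg]
    exact hG1'.deriv
  have hD1g : D1 (fun u => jacobiP A β n u * (1-u)^s)
      = fun x => (x - 1) *
        (C0 * F1 x * (1-x)^s + C0 * F0 x * ((s:ℝ) * (1-x)^(s-1) * (-1))) := by
    funext x
    simp only [D1, hdg]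
  have hD1D1 : D1 (D1 (fun u => jacobiP A β n u * (1-u)^s)) t
      = (t - 1) * (1 *
          (C0 * F1 t * (1-t)^s + C0 * F0 t * ((s:ℝ) * (1-t)^(s-1) * (-1)))
        + (t - 1) *
          ((C0 * F2 t * (1-t)^s + C0 * F1 t * ((s:ℝ) * (1-t)^(s-1) * (-1)))
            + (C0 * F1 t * ((s:ℝ) * (1-t)^(s-1) * (-1))
              + C0 * F0 t * (((s-1:ℕ):ℝ) * (1-t)^(s-1-1) * (-1) * (s:ℝ) * (-1))))) := by
    rw [hD1g]
    simp only [D1]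
    congr 1
    exact (((hasDerivAt_id t).sub_const 1).mul hG1').deriv
  have hODE : t * (1 - t) * F2 t + (β + 1 - (A + β + 2) * t) * F1 t
      + (n * ((n:ℝ) + A + β + 1)) * F0 t = 0 := jacobi_ode A β hβ' n t
  rw [hD1D1]
  simp only [D2s, D1]
  rw [hddg, hdg]
  simp only [hJ]
  rw [hA] at hODE
  rcases s with _ | _ | m
  · simp only [Nat.zero_sub, Nat.cast_zero, zero_mul, mul_zero, zero_div, pow_zero,
      mul_one, sub_zero, add_zero, neg_zero, mul_neg, neg_neg]
    push_cast at hODE ⊢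
    linear_combination C0 * hODE
  · norm_num at hODE ⊢
    rw [show (1 + α) * (C0 * F0 t * (1 - t)) / (1 - t) = (1 + α) * (C0 * F0 t) by
      field_simp]
    linear_combination ((1-t) * C0) * hODE
  · have e1 : m + 2 - 1 = m + 1 := rfl
    have e2 : m + 2 - 1 - 1 = m := rfl
    simp only [e1, e2] at *
    push_cast at hODE ⊢
    rw [show ((m:ℝ) + 1 + 1) * ((m:ℝ) + 1 + 1 + α) * (C0 * F0 t * (1 - t) ^ (m + 1 + 1)) / (1 - t)
        = ((m:ℝ) + 1 + 1) * ((m:ℝ) + 1 + 1 + α) * (C0 * F0 t * (1 - t) ^ (m + 1)) by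
      rw [pow_succ]; field_simp]
    simp only [pow_succ]
    linear_combination ((1-t)^m * (1-t) * (1-t) * C0) * hODE
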